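/- For the F^{(-α)}-potential φ(ξ) = log ∫ (1 + α ξ·h(x))^{1/α} dμ(x), under analogous regularity conditions: if 0 < α < 1 then e^{αφ} is convex (φ is α-exponentially convex), and if α > 1 then e^{αφ} is concave (φ is α-exponentially concave). Indeed ∂²(e^{αφ})/∂ξⁱ∂ξʲ = α(1-α) e^{αφ(ξ)} Cov_ξ(Z_ξⁱ, Z_ξʲ) with Z_ξ = h(X)/(1 + α ξ·h(X)). -/

import Mathlib

/-! Along a line `ξ + t • v` the function `e^{αφ}` is `G^α` with `G = ∫ (1 + α ξ·h)^{1/α} dμ`.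
Differentiating under the integral, `G' = G · E_ξ[v·Z_ξ]` and
`(G · E_ξ[v·Z_ξ])' = (1 - α) G · E_ξ[(v·Z_ξ)²]`, so `(G^α)'' = α(1-α) G^α Var_ξ(v·Z_ξ)`.
The variance is nonnegative, hence the sign of `α(1-α)` fixes the sign of every second
directional derivative, and this decides convexity line by line. -/

open scoped RealInnerProductSpace
open MeasureTheory

/-- The normalizing integral of the `F^{(-α)}`-family. -/
noncomputable def Gint {d : ℕ} {X : Type*} [MeasurableSpace X] (μ : Measure X)
    (α : ℝ) (h : X → EuclideanSpace ℝ (Fin d))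
    (ξ : EuclideanSpace ℝ (Fin d)) : ℝ :=
  ∫ x, (1 + α * ⟪ξ, h x⟫) ^ (1/α) ∂μ

/-- The `F^{(-α)}`-potential `φ(ξ) = log ∫ (1 + α ξ·h)^{1/α} dμ`. -/
noncomputable def Gpot {d : ℕ} {X : Type*} [MeasurableSpace X] (μ : Measure X)
    (α : ℝ) (h : X → EuclideanSpace ℝ (Fin d))
    (ξ : EuclideanSpace ℝ (Fin d)) : ℝ :=
  Real.log (Gint μ α h ξ)

/-- The density `p(x,ξ) = (1 + α ξ·h(x))^{1/α} e^{-φ(ξ)}` of the `F^{(-α)}`-family. -/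
noncomputable def Gdens {d : ℕ} {X : Type*} [MeasurableSpace X] (μ : Measure X)
    (α : ℝ) (h : X → EuclideanSpace ℝ (Fin d))
    (ξ : EuclideanSpace ℝ (Fin d)) (x : X) : ℝ :=
  (1 + α * ⟪ξ, h x⟫) ^ (1/α) * Real.exp (-Gpot μ α h ξ)

/-- `v·Z_ξ` where `Z_ξ = h(X)/(1 + α ξ·h(X))`. -/
noncomputable def ZstatG {d : ℕ} {X : Type*} (α : ℝ)
    (h : X → EuclideanSpace ℝ (Fin d))
    (ξ v : EuclideanSpace ℝ (Fin d)) (x : X) : ℝ :=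
  ⟪v, h x⟫ / (1 + α * ⟪ξ, h x⟫)


section LineDerivatives

variable {E : Type*}

lemma hasDerivAt_line_of_forall_mem [AddCommGroup E] [Module ℝ E] {Ω : Set E} {f f' : E → ℝ}
    {v : E} (hf : ∀ ξ ∈ Ω, HasDerivAt (fun t : ℝ => f (ξ + t • v)) (f' ξ) 0) {ξ : E} {t₀ : ℝ}
    (ht₀ : ξ + t₀ • v ∈ Ω) :
    HasDerivAt (fun t : ℝ => f (ξ + t • v)) (f' (ξ + t₀ • v)) t₀ := by
  have hat : HasDerivAt (fun s : ℝ => f (ξ + t₀ • v + s • v)) (f' (ξ + t₀ • v)) (t₀ - t₀) := by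
    rw [sub_self]
    exact hf _ ht₀
  have hshift : (fun t : ℝ => f (ξ + t • v)) = fun t => f (ξ + t₀ • v + (t - t₀) • v) := by
    funext t
    congr 1
    module
  rw [hshift]
  exact hat.comp_sub_const t₀ t₀

variable [NormedAddCommGroup E] [NormedSpace ℝ E] {Ω : Set E}

lemma deriv_deriv_line_eq (hΩ : IsOpen Ω) {f f' : E → ℝ} {v : E}
    (hf : ∀ ξ ∈ Ω, HasDerivAt (fun t : ℝ => f (ξ + t • v)) (f' ξ) 0) {ξ : E} (hξ : ξ ∈ Ω)
    {c : ℝ} (hf' : HasDerivAt (fun t : ℝ => f' (ξ + t • v)) c 0) :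
    deriv (fun t : ℝ => deriv (fun s : ℝ => f (ξ + s • v)) t) 0 = c := by
  have hline : Continuous fun t : ℝ => ξ + t • v := by fun_prop
  have hnear : ∀ᶠ t in nhds (0 : ℝ), ξ + t • v ∈ Ω :=
    hline.continuousAt.preimage_mem_nhds (by simpa using hΩ.mem_nhds hξ)
  have hderiv : (fun t : ℝ => deriv (fun s : ℝ => f (ξ + s • v)) t) =ᶠ[nhds 0]
      fun t => f' (ξ + t • v) :=
    hnear.mono fun t ht => (hasDerivAt_line_of_forall_mem hf ht).deriv
  rw [hderiv.deriv_eq, hf'.deriv]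

theorem convexOn_of_hasDerivAt_line2_nonneg (hconv : Convex ℝ Ω)
    {f : E → ℝ} {f' f'' : E → E → ℝ}
    (hf : ∀ ξ ∈ Ω, ∀ v, HasDerivAt (fun t : ℝ => f (ξ + t • v)) (f' v ξ) 0)
    (hf' : ∀ ξ ∈ Ω, ∀ v, HasDerivAt (fun t : ℝ => f' v (ξ + t • v)) (f'' v ξ) 0)
    (hf'' : ∀ ξ ∈ Ω, ∀ v, 0 ≤ f'' v ξ) : ConvexOn ℝ Ω f := by
  refine ⟨hconv, fun x hx y hy a b ha hb hab => ?_⟩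
  set L := AffineMap.lineMap (k := ℝ) x y
  have hL : ∀ t : ℝ, L t = x + t • (y - x) := fun t => by
    rw [AffineMap.lineMap_apply_module', add_comm]
  have hderiv : ∀ t ∈ L ⁻¹' Ω, HasDerivAt (fun t => f (L t)) (f' (y - x) (L t)) t :=
    fun t ht => by
      simp only [Set.mem_preimage, hL] at ht ⊢
      exact hasDerivAt_line_of_forall_mem (fun ξ hξ => hf ξ hξ _) ht
  have hderiv2 : ∀ t ∈ L ⁻¹' Ω, HasDerivAt (fun t => f' (y - x) (L t)) (f'' (y - x) (L t)) t :=
    fun t ht => by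
      simp only [Set.mem_preimage, hL] at ht ⊢
      exact hasDerivAt_line_of_forall_mem (fun ξ hξ => hf' ξ hξ _) ht
  have hlineConvex := convexOn_of_hasDerivWithinAt2_nonneg (hconv.affine_preimage L)
    (fun t ht => (hderiv t ht).continuousAt.continuousWithinAt)
    (fun t ht => (hderiv t (interior_subset ht)).hasDerivWithinAt)
    (fun t ht => (hderiv2 t (interior_subset ht)).hasDerivWithinAt)
    (fun t ht => hf'' _ (interior_subset (s := L ⁻¹' Ω) ht) _)
  have h0 : (0 : ℝ) ∈ L ⁻¹' Ω := by simpa [L] using hx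
  have h1 : (1 : ℝ) ∈ L ⁻¹' Ω := by simpa [L] using hy
  have hb' : L b = a • x + b • y := by
    rw [hL, eq_sub_of_add_eq hab]
    module
  simpa [L, hb'] using hlineConvex.2 h0 h1 ha hb hab

theorem concaveOn_of_hasDerivAt_line2_nonpos (hconv : Convex ℝ Ω)
    {f : E → ℝ} {f' f'' : E → E → ℝ}
    (hf : ∀ ξ ∈ Ω, ∀ v, HasDerivAt (fun t : ℝ => f (ξ + t • v)) (f' v ξ) 0)
    (hf' : ∀ ξ ∈ Ω, ∀ v, HasDerivAt (fun t : ℝ => f' v (ξ + t • v)) (f'' v ξ) 0)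
    (hf'' : ∀ ξ ∈ Ω, ∀ v, f'' v ξ ≤ 0) : ConcaveOn ℝ Ω f :=
  neg_convexOn_iff.mp <| convexOn_of_hasDerivAt_line2_nonneg hconv
    (f' := -f') (f'' := -f'') (fun ξ hξ v => (hf ξ hξ v).neg) (fun ξ hξ v => (hf' ξ hξ v).neg)
    (fun ξ hξ v => neg_nonneg.mpr (hf'' ξ hξ v))

end LineDerivatives

section PowerAlongLines

variable {E : Type*} [AddCommGroup E] [Module ℝ E] {G A B : E → ℝ} {ξ v : E} {α : ℝ}

lemma hasDerivAt_line_exp_mul_log (hG : 0 < G ξ)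
    (hA : HasDerivAt (fun t : ℝ => G (ξ + t • v)) (A ξ) 0) :
    HasDerivAt (fun t : ℝ => Real.exp (α * Real.log (G (ξ + t • v))))
      (Real.exp (α * Real.log (G ξ)) * (α * (A ξ / G ξ))) 0 := by
  have hG0 : G (ξ + (0 : ℝ) • v) ≠ 0 := by simpa using hG.ne'
  simpa using ((hA.log hG0).const_mul α).exp

lemma hasDerivAt_line_exp_mul_log_mul_div (hG : 0 < G ξ)
    (hA : HasDerivAt (fun t : ℝ => G (ξ + t • v)) (A ξ) 0)
    (hB : HasDerivAt (fun t : ℝ => A (ξ + t • v)) ((1 - α) * B ξ) 0) :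
    HasDerivAt
      (fun t : ℝ => Real.exp (α * Real.log (G (ξ + t • v))) *
        (α * (A (ξ + t • v) / G (ξ + t • v))))
      (α * (1 - α) * Real.exp (α * Real.log (G ξ)) * (B ξ / G ξ - (A ξ / G ξ) ^ 2)) 0 := by
  have hG0 : G (ξ + (0 : ℝ) • v) ≠ 0 := by simpa using hG.ne'
  have hprod := (hasDerivAt_line_exp_mul_log (α := α) hG hA).mul ((hB.div hA hG0).const_mul α)
  refine hprod.congr_deriv ?_
  simp only [Pi.div_apply, zero_smul, add_zero]
  field_simp
  ring

end PowerAlongLines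

lemma sq_integral_mul_le_integral_sq_mul {X : Type*} [MeasurableSpace X] {μ : Measure X}
    {p Z : X → ℝ} (hp : ∀ x, 0 ≤ p x) (hp1 : ∫ x, p x ∂μ = 1) (hpi : Integrable p μ)
    (hZ : Integrable (fun x => Z x * p x) μ) (hZ2 : Integrable (fun x => Z x ^ 2 * p x) μ) :
    (∫ x, Z x * p x ∂μ) ^ 2 ≤ ∫ x, Z x ^ 2 * p x ∂μ := by
  set m := ∫ x, Z x * p x ∂μ
  have hexpand : (fun x => (Z x - m) ^ 2 * p x) =
      fun x => Z x ^ 2 * p x - 2 * m * (Z x * p x) + m ^ 2 * p x := by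
    funext x
    ring
  have hcentral : 0 ≤ ∫ x, (Z x - m) ^ 2 * p x ∂μ :=
    integral_nonneg fun x => mul_nonneg (sq_nonneg _) (hp x)
  have hlin : Integrable (fun x => Z x ^ 2 * p x - 2 * m * (Z x * p x)) μ :=
    hZ2.sub (hZ.const_mul _)
  rw [hexpand, integral_add hlin (hpi.const_mul _),
    integral_sub hZ2 (hZ.const_mul _), integral_const_mul, integral_const_mul, hp1] at hcentral
  nlinarith

section Potential

variable {d : ℕ} {X : Type*} [MeasurableSpace X] {μ : Measure X} {α : ℝ}
  {h : X → EuclideanSpace ℝ (Fin d)} {ξ v : EuclideanSpace ℝ (Fin d)}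

/-- `Gint μ α h ξ` times the `k`-th moment `E_ξ[(v·Z_ξ)^k]`. -/
noncomputable def Gmoment (μ : Measure X) (α : ℝ) (h : X → EuclideanSpace ℝ (Fin d)) (k : ℕ)
    (v ξ : EuclideanSpace ℝ (Fin d)) : ℝ :=
  ∫ x, ⟪v, h x⟫ ^ k * (1 + α * ⟪ξ, h x⟫) ^ (1/α - k) ∂μ

lemma Gmoment_one : Gmoment μ α h 1 v ξ = ∫ x, ⟪v, h x⟫ * (1 + α * ⟪ξ, h x⟫) ^ (1/α - 1) ∂μ := by
  simp [Gmoment]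

lemma Gmoment_two :
    Gmoment μ α h 2 v ξ = ∫ x, ⟪v, h x⟫ ^ 2 * (1 + α * ⟪ξ, h x⟫) ^ (1/α - 2) ∂μ := by
  simp [Gmoment]

lemma Gint_pos [IsProbabilityMeasure μ] (hpos : ∀ x, 0 < 1 + α * ⟪ξ, h x⟫)
    (hint : Integrable (fun x => (1 + α * ⟪ξ, h x⟫) ^ (1/α)) μ) : 0 < Gint μ α h ξ := by
  have hsupp : Function.support (fun x => (1 + α * ⟪ξ, h x⟫) ^ (1/α)) = Set.univ :=
    Set.eq_univ_of_forall fun x => (Real.rpow_pos_of_pos (hpos x) _).ne'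
  refine (integral_pos_iff_support_of_nonneg (fun x => Real.rpow_nonneg (hpos x).le _) hint).2 ?_
  rw [hsupp, measure_univ]
  exact one_pos

lemma Gdens_nonneg (hpos : ∀ x, 0 < 1 + α * ⟪ξ, h x⟫) (x : X) : 0 ≤ Gdens μ α h ξ x :=
  mul_nonneg (Real.rpow_nonneg (hpos x).le _) (Real.exp_nonneg _)

lemma integrable_ZstatG_pow_mul_Gdens {k : ℕ}
    (hint : Integrable (fun x => ZstatG α h ξ v x ^ k * (1 + α * ⟪ξ, h x⟫) ^ (1/α)) μ) :
    Integrable (fun x => ZstatG α h ξ v x ^ k * Gdens μ α h ξ x) μ := by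
  simpa only [Gdens, mul_assoc] using hint.mul_const (Real.exp (-Gpot μ α h ξ))

lemma integral_ZstatG_pow_mul_Gdens (hpos : ∀ x, 0 < 1 + α * ⟪ξ, h x⟫)
    (hG : 0 < Gint μ α h ξ) (k : ℕ) :
    ∫ x, ZstatG α h ξ v x ^ k * Gdens μ α h ξ x ∂μ = Gmoment μ α h k v ξ / Gint μ α h ξ := by
  have hterm : ∀ x, ZstatG α h ξ v x ^ k * Gdens μ α h ξ x =
      ⟪v, h x⟫ ^ k * (1 + α * ⟪ξ, h x⟫) ^ (1/α - k) / Gint μ α h ξ := fun x => by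
    rw [ZstatG, Gdens, Gpot, Real.exp_neg, Real.exp_log hG,
      Real.rpow_sub_natCast (hpos x).ne', div_pow]
    field_simp
  simp only [hterm, integral_div, Gmoment]

lemma integral_Gdens (hG : 0 < Gint μ α h ξ) :
    ∫ x, Gdens μ α h ξ x ∂μ = 1 := by
  simp only [Gdens, Gpot, Real.exp_neg, Real.exp_log hG, integral_mul_const]
  exact mul_inv_cancel₀ hG.ne'

lemma integral_ZstatG_sq_mul_Gdens_sub_sq (hpos : ∀ x, 0 < 1 + α * ⟪ξ, h x⟫)
    (hG : 0 < Gint μ α h ξ) :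
    (∫ x, ZstatG α h ξ v x ^ 2 * Gdens μ α h ξ x ∂μ) -
        (∫ x, ZstatG α h ξ v x * Gdens μ α h ξ x ∂μ) ^ 2 =
      Gmoment μ α h 2 v ξ / Gint μ α h ξ - (Gmoment μ α h 1 v ξ / Gint μ α h ξ) ^ 2 := by
  have hfirst := integral_ZstatG_pow_mul_Gdens (v := v) hpos hG 1
  simp only [pow_one] at hfirst
  rw [hfirst, integral_ZstatG_pow_mul_Gdens hpos hG 2]

lemma sq_integral_ZstatG_mul_Gdens_le (hpos : ∀ x, 0 < 1 + α * ⟪ξ, h x⟫)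
    (hG : 0 < Gint μ α h ξ)
    (hint : ∀ k : ℕ, k ≤ 2 →
      Integrable (fun x => ZstatG α h ξ v x ^ k * (1 + α * ⟪ξ, h x⟫) ^ (1/α)) μ) :
    (∫ x, ZstatG α h ξ v x * Gdens μ α h ξ x ∂μ) ^ 2 ≤
      ∫ x, ZstatG α h ξ v x ^ 2 * Gdens μ α h ξ x ∂μ := by
  have hint' := fun k hk => integrable_ZstatG_pow_mul_Gdens (hint k hk)
  refine sq_integral_mul_le_integral_sq_mul (Gdens_nonneg hpos) (integral_Gdens hG) ?_ ?_
    (hint' 2 le_rfl)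
  · simpa only [pow_zero, one_mul] using hint' 0 (by norm_num)
  · simpa only [pow_one] using hint' 1 (by norm_num)

end Potential

theorem stmt14 {d : ℕ} {X : Type*} [MeasurableSpace X] (μ : Measure X)
    [IsProbabilityMeasure μ] (α : ℝ) (hα : 0 < α)
    (h : X → EuclideanSpace ℝ (Fin d))
    (Ω : Set (EuclideanSpace ℝ (Fin d))) (hΩ : IsOpen Ω) (hconv : Convex ℝ Ω)
    (hpos : ∀ ξ ∈ Ω, ∀ x, 0 < 1 + α * ⟪ξ, h x⟫)
    (hint : ∀ ξ ∈ Ω, ∀ v : EuclideanSpace ℝ (Fin d), ∀ k : ℕ, k ≤ 2 →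
      Integrable (fun x => ZstatG α h ξ v x ^ k *
        (1 + α * ⟪ξ, h x⟫) ^ (1/α)) μ)
    -- differentiation under the integral sign:
    (hDUI0 : ∀ ξ ∈ Ω, ∀ v : EuclideanSpace ℝ (Fin d),
      HasDerivAt (fun t : ℝ => Gint μ α h (ξ + t • v))
        (∫ x, ⟪v, h x⟫ * (1 + α * ⟪ξ, h x⟫) ^ (1/α - 1) ∂μ) 0)
    (hDUI1 : ∀ ξ ∈ Ω, ∀ v : EuclideanSpace ℝ (Fin d),
      HasDerivAt (fun t : ℝ =>
          ∫ x, ⟪v, h x⟫ * (1 + α * ⟪ξ + t • v, h x⟫) ^ (1/α - 1) ∂μ)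
        ((1 - α) *
          ∫ x, ⟪v, h x⟫ ^ 2 * (1 + α * ⟪ξ, h x⟫) ^ (1/α - 2) ∂μ) 0) :
    (∀ ξ ∈ Ω, ∀ v : EuclideanSpace ℝ (Fin d),
      deriv (fun t : ℝ =>
          deriv (fun s : ℝ => Real.exp (α * Gpot μ α h (ξ + s • v))) t) 0 =
        α * (1 - α) * Real.exp (α * Gpot μ α h ξ) *
          ((∫ x, ZstatG α h ξ v x ^ 2 * Gdens μ α h ξ x ∂μ) -
            (∫ x, ZstatG α h ξ v x * Gdens μ α h ξ x ∂μ) ^ 2)) ∧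
    (α < 1 → ConvexOn ℝ Ω (fun ξ => Real.exp (α * Gpot μ α h ξ))) ∧
    (1 < α → ConcaveOn ℝ Ω (fun ξ => Real.exp (α * Gpot μ α h ξ))) := by
  have hG : ∀ ξ ∈ Ω, 0 < Gint μ α h ξ := fun ξ hξ =>
    Gint_pos (hpos ξ hξ) (by simpa only [pow_zero, one_mul] using hint ξ hξ 0 0 (by norm_num))
  simp only [← Gmoment_one, ← Gmoment_two] at hDUI0 hDUI1
  set f' := fun v ξ => Real.exp (α * Gpot μ α h ξ) * (α * (Gmoment μ α h 1 v ξ / Gint μ α h ξ))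
  set f'' := fun v ξ => α * (1 - α) * Real.exp (α * Gpot μ α h ξ) *
    ((∫ x, ZstatG α h ξ v x ^ 2 * Gdens μ α h ξ x ∂μ) -
      (∫ x, ZstatG α h ξ v x * Gdens μ α h ξ x ∂μ) ^ 2)
  have hf : ∀ ξ ∈ Ω, ∀ v, HasDerivAt (fun t : ℝ => Real.exp (α * Gpot μ α h (ξ + t • v)))
      (f' v ξ) 0 := fun ξ hξ v => hasDerivAt_line_exp_mul_log (hG ξ hξ) (hDUI0 ξ hξ v)
  have hf' : ∀ ξ ∈ Ω, ∀ v, HasDerivAt (fun t : ℝ => f' v (ξ + t • v)) (f'' v ξ) 0 :=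
    fun ξ hξ v => by
      have hd := hasDerivAt_line_exp_mul_log_mul_div (hG ξ hξ) (hDUI0 ξ hξ v) (hDUI1 ξ hξ v)
      rwa [← integral_ZstatG_sq_mul_Gdens_sub_sq (hpos ξ hξ) (hG ξ hξ)] at hd
  have hvar : ∀ ξ ∈ Ω, ∀ v, 0 ≤ (∫ x, ZstatG α h ξ v x ^ 2 * Gdens μ α h ξ x ∂μ) -
      (∫ x, ZstatG α h ξ v x * Gdens μ α h ξ x ∂μ) ^ 2 := fun ξ hξ v =>
    sub_nonneg.2 (sq_integral_ZstatG_mul_Gdens_le (hpos ξ hξ) (hG ξ hξ) (hint ξ hξ v))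
  refine ⟨fun ξ hξ v => deriv_deriv_line_eq hΩ (f := fun η => Real.exp (α * Gpot μ α h η))
      (fun η hη => hf η hη v) hξ (hf' ξ hξ v),
    fun hα1 => convexOn_of_hasDerivAt_line2_nonneg hconv hf hf' fun ξ hξ v => ?_,
    fun hα1 => concaveOn_of_hasDerivAt_line2_nonpos hconv hf hf' fun ξ hξ v => ?_⟩
  · have hcoef : 0 ≤ α * (1 - α) := mul_nonneg hα.le (by linarith)
    exact mul_nonneg (mul_nonneg hcoef (Real.exp_nonneg _)) (hvar ξ hξ v)
  · have hcoef : α * (1 - α) ≤ 0 := mul_nonpos_of_nonneg_of_nonpos hα.le (by linarith)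
    exact mul_nonpos_of_nonpos_of_nonneg
      (mul_nonpos_of_nonpos_of_nonneg hcoef (Real.exp_nonneg _)) (hvar ξ hξ v)
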